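/- arXiv:2112.10931 — 2 statements merged into one kernel-verified Lean document; each statement's English description precedes it below -/
import Mathlib

section
/- In the gradual-decay 2D model with one interfered adversary, if the sender can choose direction θ and strength α such that g(|θ−θ_1|)·α − δ = s_1 and g(|θ−θ_2|)·α = s_2 for target values s_1, s_2, then both adversaries receive exactly the same signal as in the no-interference baseline; in particular, for g strictly decreasing and continuous with appropriate range, such (θ, α) exists when the angular separation |θ_1 − θ_2| is large enough that g(0)·α_max − δ ≥ s_1 is attainable. -/
open Set

/-- Gradual-decay 2D model with one interfered adversary.  If the direction `θ` and
strength `α` satisfy `g(|θ-θ1|)·α - δ = s1` and `g(|θ-θ2|)·α = s2`, both adversaries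
receive the baseline signals.  Such `(θ, α)` with `α ≤ α_max` exists (via the
intermediate value theorem) when the angular separation is large enough that
pointing at adversary 1 overshoots the target: `s1 ≤ s2/g(θ2-θ1) - δ`. -/
theorem gradual_decay_existence (g : ℝ → ℝ) (θ1 θ2 θ0 α0 αmax δ s1 s2 : ℝ)
    (hg_cont : ContinuousOn g (Icc 0 π))
    (hg_anti : StrictAntiOn g (Icc 0 π))
    (hg0 : g 0 = 1)
    (hg_pos : ∀ t ∈ Icc (0:ℝ) π, 0 < g t ∧ g t ≤ 1)
    (hθ : θ1 ≤ θ0) (hθ' : θ0 ≤ θ2)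
    (hrange : θ2 - θ1 ≤ π)
    (hs1 : s1 = g (θ0 - θ1) * α0) (hs2 : s2 = g (θ2 - θ0) * α0)
    (hδ : 0 ≤ δ) (hα0 : 0 ≤ α0)
    (hattain : s1 ≤ s2 / g (θ2 - θ1) - δ)
    (hαmax : s2 / g (θ2 - θ1) ≤ αmax) :
    ∃ θ ∈ Icc θ1 θ0, ∃ α : ℝ, α ≤ αmax ∧
      g (θ - θ1) * α - δ = s1 ∧ g (θ2 - θ) * α = s2 := by
  -- membership facts
  have hmem1 : ∀ θ ∈ Icc θ1 θ0, θ - θ1 ∈ Icc (0:ℝ) π := by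
    rintro θ ⟨h1, h2⟩
    constructor <;> linarith
  have hmem2 : ∀ θ ∈ Icc θ1 θ0, θ2 - θ ∈ Icc (0:ℝ) π := by
    rintro θ ⟨h1, h2⟩
    constructor <;> linarith
  have hg2pos : ∀ θ ∈ Icc θ1 θ0, 0 < g (θ2 - θ) := fun θ hθm =>
    (hg_pos _ (hmem2 θ hθm)).1
  set F : ℝ → ℝ := fun θ => g (θ - θ1) * (s2 / g (θ2 - θ)) with hF
  have hFcont : ContinuousOn F (Icc θ1 θ0) := by
    apply ContinuousOn.mul
    · exact hg_cont.comp (continuousOn_id.sub continuousOn_const) hmem1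
    · exact continuousOn_const.div
        (hg_cont.comp (continuousOn_const.sub continuousOn_id) hmem2)
        (fun θ hθm => ne_of_gt (hg2pos θ hθm))
  have hθ1mem : θ1 ∈ Icc θ1 θ0 := ⟨le_refl _, hθ⟩
  have hθ0mem : θ0 ∈ Icc θ1 θ0 := ⟨hθ, le_refl _⟩
  have hFθ1 : F θ1 = s2 / g (θ2 - θ1) := by
    simp [hF, hg0]
  have hFθ0 : F θ0 = s1 := by
    have hne : g (θ2 - θ0) ≠ 0 := ne_of_gt (hg2pos θ0 hθ0mem)
    simp only [hF, hs2, hs1]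
    field_simp
  have hkey : (δ + s1) ∈ Icc (F θ0) (F θ1) := by
    constructor
    · rw [hFθ0]; linarith
    · rw [hFθ1]; linarith
  obtain ⟨θ, hθmem, hθeq⟩ := intermediate_value_Icc' hθ hFcont hkey
  refine ⟨θ, hθmem, s2 / g (θ2 - θ), ?_, ?_, ?_⟩
  · -- α ≤ αmax
    have hs2nn : 0 ≤ s2 := by
      rw [hs2]
      exact mul_nonneg (le_of_lt (hg2pos θ0 hθ0mem)) hα0
    have hgle : g (θ2 - θ1) ≤ g (θ2 - θ) := by
      rcases eq_or_lt_of_le hθmem.1 with h | h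
      · rw [← h]
      · exact le_of_lt (hg_anti (hmem2 θ hθmem) (hmem2 θ1 hθ1mem) (by linarith))
    calc s2 / g (θ2 - θ) ≤ s2 / g (θ2 - θ1) := by
          apply div_le_div_of_nonneg_left hs2nn (hg_pos _ (hmem2 θ1 hθ1mem)).1 hgle
      _ ≤ αmax := hαmax
  · -- first equation
    have : F θ = δ + s1 := hθeq
    simp only [hF] at this
    linarith
  · -- second equation
    have hne : g (θ2 - θ) ≠ 0 := ne_of_gt (hg2pos θ hθmem)
    field_simp
end

section
/- If n·(δ/σ) ≤ ln((1−p)/p), i.e., n ≤ ln((1−p)/p)·σ/δ, then the likelihood of the observations under Lap(μ_1,σ) exceeds the likelihood under Lap(μ_2,σ) by a factor of at most (1−p)/p; equivalently the normalized posterior probability of Lap(μ_1,σ) under a uniform prior is at most 1−p. -/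
open Finset

/-- If `n·(δ/σ) ≤ ln((1-p)/p)`, then the Laplace likelihood ratio
`L(X|μ1)/L(X|μ2)` is at most `(1-p)/p`; equivalently, the normalized posterior
probability of `Lap(μ1,σ)` under a uniform prior is at most `1-p`. -/
theorem laplace_likelihood_ratio_bound (n : ℕ) (x : Fin n → ℝ) (σ μ1 μ2 δ p : ℝ)
    (hσ : 0 < σ) (hδ : δ = μ2 - μ1) (hδpos : 0 < δ) (hp : 0 < p) (hp2 : p < 1/2)
    (L : ℝ → ℝ) (hL : ∀ μ, L μ = ∏ i, (1 / (2 * σ)) * Real.exp (-|x i - μ| / σ))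
    (hn : (n : ℝ) * (δ / σ) ≤ Real.log ((1 - p) / p)) :
    L μ1 / L μ2 ≤ (1 - p) / p ∧ L μ1 / (L μ1 + L μ2) ≤ 1 - p := by
  have hp1 : 0 < 1 - p := by linarith
  have hr : (0:ℝ) < (1 - p) / p := div_pos hp1 hp
  have hLpos : ∀ μ, 0 < L μ := by
    intro μ; rw [hL]
    exact Finset.prod_pos fun i _ => by positivity
  have key : L μ1 ≤ Real.exp ((n : ℝ) * (δ / σ)) * L μ2 := by
    rw [hL, hL]
    have he : Real.exp ((n : ℝ) * (δ / σ)) = ∏ _i : Fin n, Real.exp (δ / σ) := by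
      rw [Finset.prod_const, ← Real.exp_nat_mul, Finset.card_univ, Fintype.card_fin]
    rw [he, ← Finset.prod_mul_distrib]
    apply Finset.prod_le_prod
    · intro i _; positivity
    · intro i _
      have h1 : |x i - μ2| - |x i - μ1| ≤ δ := by
        have := abs_sub_abs_le_abs_sub (x i - μ2) (x i - μ1)
        have h2 : (x i - μ2) - (x i - μ1) = μ1 - μ2 := by ring
        rw [h2] at this
        have h3 : |μ1 - μ2| = δ := by
          rw [abs_sub_comm, ← hδ]; exact abs_of_pos hδpos
        linarith
      have h4 : -|x i - μ1| / σ ≤ δ / σ + -|x i - μ2| / σ := by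
        rw [← add_div, div_le_div_iff₀ hσ hσ]
        nlinarith
      have h5 : Real.exp (-|x i - μ1| / σ) ≤ Real.exp (δ / σ) * Real.exp (-|x i - μ2| / σ) := by
        rw [← Real.exp_add]
        exact Real.exp_le_exp.mpr h4
      have hc : (0:ℝ) < 1 / (2 * σ) := by positivity
      calc 1 / (2 * σ) * Real.exp (-|x i - μ1| / σ)
          ≤ 1 / (2 * σ) * (Real.exp (δ / σ) * Real.exp (-|x i - μ2| / σ)) :=
            mul_le_mul_of_nonneg_left h5 hc.le
        _ = Real.exp (δ / σ) * (1 / (2 * σ) * Real.exp (-|x i - μ2| / σ)) := by ring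
  have hexp : Real.exp ((n : ℝ) * (δ / σ)) ≤ (1 - p) / p := by
    calc Real.exp ((n : ℝ) * (δ / σ)) ≤ Real.exp (Real.log ((1 - p) / p)) :=
          Real.exp_le_exp.mpr hn
      _ = (1 - p) / p := Real.exp_log hr
  have key2 : L μ1 ≤ (1 - p) / p * L μ2 :=
    key.trans (mul_le_mul_of_nonneg_right hexp (hLpos μ2).le)
  constructor
  · rw [div_le_iff₀ (hLpos μ2)]
    linarith [key2]
  · rw [div_le_iff₀ (by linarith [hLpos μ1, hLpos μ2] : 0 < L μ1 + L μ2)]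
    have h6 : p * L μ1 ≤ (1 - p) * L μ2 := by
      have := mul_le_mul_of_nonneg_left key2 hp.le
      calc p * L μ1 ≤ p * ((1 - p) / p * L μ2) := this
        _ = (1 - p) * L μ2 := by field_simp
    nlinarith [hLpos μ1, hLpos μ2]
end
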